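/- arXiv:1912.04099 — 3 statements merged into one kernel-verified Lean document; each statement's English description precedes it below -/
import Mathlib

section
/- Let B and B' be n × m {0,1}-matrices defined by two pairs of partitions: B_{ij} = 1 iff (i ∈ M and j ∈ A) or (i ∈ W and j ∈ R), and B'_{ij} = 1 iff (i ∈ M' and j ∈ A') or (i ∈ W' and j ∈ R'). Let k₁ = |M ∩ W'| and k₂ = |A ∩ R'|. Then the number of entries (i,j) with B_{ij} ≠ B'_{ij} equals 2mk₁ + 2nk₂ − 8k₁k₂. -/
/-!
Since `W = Mᶜ` and `R = Aᶜ`, the entry `B i j` is `1` exactly when `i ∈ M ↔ j ∈ A`, and likewise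
for `B'`. Hence `B i j ≠ B' i j` exactly when one, but not both, of `i ∈ M ∆ M'` and `j ∈ A ∆ A'`
holds, so the disagreements number `|M ∆ M'| (m - |A ∆ A'|) + (n - |M ∆ M'|) |A ∆ A'|`.
As `|M| = |M'|`, `|M ∆ M'| = 2 |M \ M'| = 2 k₁`, and similarly `|A ∆ A'| = 2 k₂`.
-/

open Finset
open scoped symmDiff

namespace Finset

variable {α β : Type*} [DecidableEq α] [DecidableEq β]

lemma card_symmDiff_eq_two_mul_card_sdiff {s t : Finset α} (h : #s = #t) :
    #(s ∆ t) = 2 * #(s \ t) := by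
  rw [symmDiff_def, sup_eq_union, card_union_of_disjoint disjoint_sdiff_sdiff,
    ← card_sdiff_eq_card_sdiff_iff.2 h, two_mul]

variable [Fintype α] [Fintype β]

lemma compl_eq_of_union_eq_univ {s t : Finset α} (hu : s ∪ t = univ) (hd : Disjoint s t) :
    sᶜ = t :=
  (isCompl_iff.2 ⟨hd, codisjoint_iff.2 hu⟩).compl_eq

lemma card_filter_xor_mem_prod (s : Finset α) (t : Finset β) :
    #{p : α × β | Xor (p.1 ∈ s) (p.2 ∈ t)} = #s * #tᶜ + #sᶜ * #t := by
  have hdisj : Disjoint (s ×ˢ tᶜ) (sᶜ ×ˢ t) :=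
    disjoint_product.2 (Or.inl disjoint_compl_right)
  rw [← card_product, ← card_product, ← card_union_of_disjoint hdisj]
  congr 1
  ext p
  simp only [xor_def, mem_filter, mem_univ, true_and, mem_union, mem_product, mem_compl]
  tauto

end Finset

theorem rating_matrix_disagreement_count_general (n m : ℕ)
    (M W M' W' : Finset (Fin n)) (A R A' R' : Finset (Fin m))
    (hMW : M ∪ W = Finset.univ) (hdisjMW : Disjoint M W)
    (hMW' : M' ∪ W' = Finset.univ) (hdisjMW' : Disjoint M' W')
    (hAR : A ∪ R = Finset.univ) (hdisjAR : Disjoint A R)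
    (hAR' : A' ∪ R' = Finset.univ) (hdisjAR' : Disjoint A' R')
    (hM : M.card = n / 2)
    (hM' : M'.card = n / 2)
    (hA : A.card = m / 2)
    (hA' : A'.card = m / 2)
    (k₁ k₂ : ℕ) (hk₁ : k₁ = (M ∩ W').card) (hk₂ : k₂ = (A ∩ R').card) :
    (Finset.univ.filter fun p : Fin n × Fin m =>
        (decide ((p.1 ∈ M ∧ p.2 ∈ A) ∨ (p.1 ∈ W ∧ p.2 ∈ R)) ≠
          decide ((p.1 ∈ M' ∧ p.2 ∈ A') ∨ (p.1 ∈ W' ∧ p.2 ∈ R')))).card =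
      2 * m * k₁ + 2 * n * k₂ - 8 * (k₁ * k₂) := by
  obtain rfl := compl_eq_of_union_eq_univ hMW hdisjMW
  obtain rfl := compl_eq_of_union_eq_univ hMW' hdisjMW'
  obtain rfl := compl_eq_of_union_eq_univ hAR hdisjAR
  obtain rfl := compl_eq_of_union_eq_univ hAR' hdisjAR'
  have hS₁ : #(M ∆ M') = 2 * k₁ := by
    rw [hk₁, ← sdiff_eq_inter_compl, card_symmDiff_eq_two_mul_card_sdiff (hM.trans hM'.symm)]
  have hS₂ : #(A ∆ A') = 2 * k₂ := by
    rw [hk₂, ← sdiff_eq_inter_compl, card_symmDiff_eq_two_mul_card_sdiff (hA.trans hA'.symm)]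
  have hdisagree : (univ.filter fun p : Fin n × Fin m =>
        (decide ((p.1 ∈ M ∧ p.2 ∈ A) ∨ (p.1 ∈ Mᶜ ∧ p.2 ∈ Aᶜ)) ≠
          decide ((p.1 ∈ M' ∧ p.2 ∈ A') ∨ (p.1 ∈ M'ᶜ ∧ p.2 ∈ A'ᶜ)))) =
      univ.filter fun p : Fin n × Fin m => Xor (p.1 ∈ M ∆ M') (p.2 ∈ A ∆ A') := by
    ext p
    simp only [mem_filter, mem_univ, true_and, ne_eq, decide_eq_decide, mem_compl, xor_def,
      mem_symmDiff]
    tauto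
  have hk₁n : 2 * k₁ ≤ n := hS₁ ▸ (card_le_univ _).trans_eq (Fintype.card_fin n)
  have hk₂m : 2 * k₂ ≤ m := hS₂ ▸ (card_le_univ _).trans_eq (Fintype.card_fin m)
  have hcross : 8 * (k₁ * k₂) ≤ 2 * m * k₁ + 2 * n * k₂ := by nlinarith
  rw [hdisagree, card_filter_xor_mem_prod, card_compl, card_compl, Fintype.card_fin,
    Fintype.card_fin, hS₁, hS₂]
  zify [hk₁n, hk₂m, hcross]
  ring

/-- For nominal rating matrices `B, B'` defined by two pairs of partitions, the
number of entries where `B` and `B'` differ is `2 m k₁ + 2 n k₂ - 8 k₁ k₂`,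
where `k₁ = |M ∩ W'|` and `k₂ = |A ∩ R'|`. -/
theorem rating_matrix_disagreement_count (n m : ℕ) (hn : Even n) (hm : Even m)
    (M W M' W' : Finset (Fin n)) (A R A' R' : Finset (Fin m))
    (hMW : M ∪ W = Finset.univ) (hdisjMW : Disjoint M W)
    (hMW' : M' ∪ W' = Finset.univ) (hdisjMW' : Disjoint M' W')
    (hAR : A ∪ R = Finset.univ) (hdisjAR : Disjoint A R)
    (hAR' : A' ∪ R' = Finset.univ) (hdisjAR' : Disjoint A' R')
    (hM : M.card = n / 2) (hW : W.card = n / 2)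
    (hM' : M'.card = n / 2) (hW' : W'.card = n / 2)
    (hA : A.card = m / 2) (hR : R.card = m / 2)
    (hA' : A'.card = m / 2) (hR' : R'.card = m / 2)
    (k₁ k₂ : ℕ) (hk₁ : k₁ = (M ∩ W').card) (hk₂ : k₂ = (A ∩ R').card) :
    (Finset.univ.filter fun p : Fin n × Fin m =>
        (decide ((p.1 ∈ M ∧ p.2 ∈ A) ∨ (p.1 ∈ W ∧ p.2 ∈ R)) ≠
          decide ((p.1 ∈ M' ∧ p.2 ∈ A') ∨ (p.1 ∈ W' ∧ p.2 ∈ R')))).card =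
      2 * m * k₁ + 2 * n * k₂ - 8 * (k₁ * k₂) :=
  rating_matrix_disagreement_count_general n m M W M' W' A R A' R' hMW hdisjMW hMW' hdisjMW' hAR
    hdisjAR hAR' hdisjAR' hM hM' hA hA' k₁ k₂ hk₁ hk₂
end

section
/- Let X ~ Bernoulli(α) and Y ~ Bernoulli(β) be independent with α, β ∈ (0,1), and let d = log(α(1−β)/(β(1−α))). Then E[exp((d/2)(Y − X))] = (√(αβ) + √((1−α)(1−β)))². -/
open MeasureTheory

/-- For independent `X ~ Bernoulli(α)` and `Y ~ Bernoulli(β)` with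
`α, β ∈ (0,1)` and `d = log(α(1-β)/(β(1-α)))`:
`E[exp((d/2)(Y - X))] = (√(αβ) + √((1-α)(1-β)))²`. -/
theorem bernoulli_edge_mgf (α β : ℝ) (hα : α ∈ Set.Ioo (0 : ℝ) 1)
    (hβ : β ∈ Set.Ioo (0 : ℝ) 1) :
    ∫ xy : Bool × Bool,
        Real.exp ((Real.log (α * (1 - β) / (β * (1 - α))) / 2) *
          ((if xy.2 then (1 : ℝ) else 0) - (if xy.1 then (1 : ℝ) else 0)))
      ∂((PMF.bernoulli (Real.toNNReal α)
            (Real.toNNReal_le_one.mpr hα.2.le)).toMeasure.prod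
          (PMF.bernoulli (Real.toNNReal β)
            (Real.toNNReal_le_one.mpr hβ.2.le)).toMeasure) =
      (Real.sqrt (α * β) + Real.sqrt ((1 - α) * (1 - β))) ^ 2 := by
  obtain ⟨hα0, hα1⟩ := hα
  obtain ⟨hβ0, hβ1⟩ := hβ
  rw [integral_fintype .of_finite]
  have hsing : ∀ a b : Bool, (((PMF.bernoulli (Real.toNNReal α)
            (Real.toNNReal_le_one.mpr hα1.le)).toMeasure.prod
          (PMF.bernoulli (Real.toNNReal β)
            (Real.toNNReal_le_one.mpr hβ1.le)).toMeasure).real {(a, b)}) =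
      (if a then α else 1 - α) * (if b then β else 1 - β) := by
    intro a b
    rw [Measure.real, show ({(a,b)} : Set (Bool × Bool)) = {a} ×ˢ {b} by simp,
      Measure.prod_prod, PMF.toMeasure_apply_singleton _ _ (measurableSet_singleton _),
      PMF.toMeasure_apply_singleton _ _ (measurableSet_singleton _)]
    cases a <;> cases b <;>
      simp [PMF.bernoulli_apply, ENNReal.toReal_mul,
        ENNReal.toReal_sub_of_le (ENNReal.coe_le_one_iff.mpr (Real.toNNReal_le_one.mpr hα1.le))
          ENNReal.one_ne_top,
        ENNReal.toReal_sub_of_le (ENNReal.coe_le_one_iff.mpr (Real.toNNReal_le_one.mpr hβ1.le))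
          ENNReal.one_ne_top,
        Real.coe_toNNReal _ hα0.le, Real.coe_toNNReal _ hβ0.le]
  rw [Fintype.sum_prod_type]
  simp only [Fintype.sum_bool, hsing, smul_eq_mul]
  norm_num
  have h1α : 0 < 1 - α := by linarith
  have h1β : 0 < 1 - β := by linarith
  have hr : 0 < α * (1 - β) / (β * (1 - α)) := by positivity
  set a := Real.sqrt α with ha
  set b := Real.sqrt β with hb
  set a' := Real.sqrt (1-α) with ha'
  set b' := Real.sqrt (1-β) with hb'
  have ha2 : a^2 = α := Real.sq_sqrt hα0.le
  have hb2 : b^2 = β := Real.sq_sqrt hβ0.le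
  have ha'2 : a'^2 = 1-α := Real.sq_sqrt h1α.le
  have hb'2 : b'^2 = 1-β := Real.sq_sqrt h1β.le
  have hap : 0 < a := Real.sqrt_pos.mpr hα0
  have hbp : 0 < b := Real.sqrt_pos.mpr hβ0
  have ha'p : 0 < a' := Real.sqrt_pos.mpr h1α
  have hb'p : 0 < b' := Real.sqrt_pos.mpr h1β
  have he : Real.exp (Real.log (α * (1 - β) / (β * (1 - α))) / 2)
      = (a * b') / (b * a') := by
    rw [Real.exp_half, Real.exp_log hr, Real.sqrt_div (by positivity),
      Real.sqrt_mul hα0.le, Real.sqrt_mul hβ0.le]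
  have hem : Real.exp (-(Real.log (α * (1 - β) / (β * (1 - α))) / 2))
      = (b * a') / (a * b') := by
    rw [Real.exp_neg, he, inv_div]
  have hab : Real.sqrt (α * β) = a * b := Real.sqrt_mul hα0.le _
  have ha'b' : Real.sqrt ((1-α) * (1-β)) = a' * b' := Real.sqrt_mul h1α.le _
  rw [hab, ha'b', he, hem, ← ha2, ← hb2, show (1:ℝ) - a^2 = a'^2 by rw [ha2, ha'2],
    show (1:ℝ) - b^2 = b'^2 by rw [hb2, hb'2]]
  field_simp
end

section
/- For α, β ∈ (0,1), the quantity (√(αβ) + √((1−α)(1−β)))² is at most exp(−(√α − √β)²). -/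
/-!
With `a = √α`, `b = √β`, `c = √(1-α)`, `d = √(1-β)` the vectors `(a, c)` and `(b, d)` are unit
vectors, so `ab + cd = 1 - ((a - b)² + (c - d)²)/2 ≤ 1 - (a - b)²/2 ≤ exp(-(a - b)²/2)`.
Squaring gives the bound.
-/

open Real

lemma mul_add_mul_le_one_sub_sq_sub_div_two {a b c d : ℝ} (hac : a ^ 2 + c ^ 2 = 1)
    (hbd : b ^ 2 + d ^ 2 = 1) : a * b + c * d ≤ 1 - (a - b) ^ 2 / 2 := by
  nlinarith [sq_nonneg (c - d)]

lemma sqrt_mul_add_sqrt_one_sub_mul_le_exp {p q : ℝ} (hp₀ : 0 ≤ p) (hp₁ : p ≤ 1) (hq₀ : 0 ≤ q)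
    (hq₁ : q ≤ 1) : √(p * q) + √((1 - p) * (1 - q)) ≤ exp (-((√p - √q) ^ 2 / 2)) := by
  have hp : √p ^ 2 + √(1 - p) ^ 2 = 1 := by
    rw [sq_sqrt hp₀, sq_sqrt (sub_nonneg.2 hp₁)]; ring
  have hq : √q ^ 2 + √(1 - q) ^ 2 = 1 := by
    rw [sq_sqrt hq₀, sq_sqrt (sub_nonneg.2 hq₁)]; ring
  rw [sqrt_mul hp₀, sqrt_mul (sub_nonneg.2 hp₁)]
  exact (mul_add_mul_le_one_sub_sq_sub_div_two hp hq).trans (one_sub_le_exp_neg _)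

/-- For `α, β ∈ (0,1)`, `(√(αβ) + √((1-α)(1-β)))² ≤ exp(-(√α - √β)²)`. -/
theorem bhattacharyya_bound (α β : ℝ) (hα : α ∈ Set.Ioo (0 : ℝ) 1)
    (hβ : β ∈ Set.Ioo (0 : ℝ) 1) :
    (Real.sqrt (α * β) + Real.sqrt ((1 - α) * (1 - β))) ^ 2 ≤
      Real.exp (-(Real.sqrt α - Real.sqrt β) ^ 2) := by
  have hcoeff := sqrt_mul_add_sqrt_one_sub_mul_le_exp hα.1.le hα.2.le hβ.1.le hβ.2.le
  calc _ ≤ exp (-((√α - √β) ^ 2 / 2)) ^ 2 := pow_le_pow_left₀ (by positivity) hcoeff 2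
    _ = _ := by rw [← exp_nat_mul]; ring_nf
end
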